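/- Let d ≥ 2, Ω the open half-space {x₁ > 0}, and H(A) = sup_{B ∈ S₁}(−B : A) (the Monge–Ampère HJB operator with f = 0). For c > 0 let v_c equal 0 on Ω and −c on the boundary {x₁ = 0}. Then v_c is a viscosity supersolution in the Barles–Souganidis sense: for every C² function φ on Ω̄ such that (v_c)_* − φ has a local minimum at x ∈ Ω̄, one has max{H(D²φ(x)), (v_c)_*(x)} ≥ 0 if x ∈ ∂Ω, and H(D²φ(x)) ≥ 0 if x ∈ Ω. -/

import Mathlib

open Filter Set Topology Matrix

abbrev E (d : ℕ) := EuclideanSpace ℝ (Fin d)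

def S1 (d : ℕ) : Set (Matrix (Fin d) (Fin d) ℝ) := {B | B.PosSemidef ∧ B.trace = 1}

def frob {d : ℕ} (B A : Matrix (Fin d) (Fin d) ℝ) : ℝ := (Bᵀ * A).trace

/-- The HJB operator H(A) = sup_{B ∈ S₁} (−B : A + f √(det B)); here used with f = 0. -/
noncomputable def Hop {d : ℕ} (f : ℝ) (A : Matrix (Fin d) (Fin d) ℝ) : ℝ :=
  sSup ((fun B => -frob B A + f * Real.sqrt B.det) '' S1 d)

/-- The Hessian matrix D²φ(x) in the standard basis. -/
noncomputable def hessMat {d : ℕ} (φ : E d → ℝ) (x : E d) : Matrix (Fin d) (Fin d) ℝ :=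
  Matrix.of fun i j =>
    fderiv ℝ (fderiv ℝ φ) x (EuclideanSpace.single i 1) (EuclideanSpace.single j 1)

/-- The closed half-space Ω̄ = {x : x₁ ≥ 0}. -/
def Obar (d : ℕ) [NeZero d] : Set (E d) := {x | 0 ≤ x 0}

/-- v_c: 0 in the open half-space, −c on the boundary; it equals its own lsc envelope. -/
noncomputable def vC {d : ℕ} [NeZero d] (c : ℝ) (x : E d) : ℝ :=
  if x 0 = 0 then -c else 0

/-!
A line through `x` parallel to the boundary stays in `Ω̄`, and `v_c` is constant on it, so `φ`
restricted to it has a local maximum at `x`: the corresponding diagonal entry of `D²φ(x)` is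
nonpositive. The rank-one projection `B` onto that direction lies in `S₁` and has
`-B : D²φ(x) ≥ 0`, whence `H(D²φ(x)) ≥ 0`, at boundary and interior points alike.
-/

theorem IsLocalMax.deriv_deriv_nonpos {f : ℝ → ℝ} {a : ℝ} (h : IsLocalMax f a)
    (hc : ContinuousAt f a) : deriv (deriv f) a ≤ 0 := by
  by_contra! hpos
  have hconst : f =ᶠ[𝓝 a] fun _ => f a := by
    filter_upwards [h, isLocalMin_of_deriv_deriv_pos hpos h.deriv_eq_zero hc] with y hmax hmin
    exact le_antisymm hmax hmin
  have hzero : deriv (deriv f) a = 0 := by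
    rw [hconst.deriv.deriv_eq]
    simp
  exact hpos.ne' hzero

section Line

variable {F : Type*} [NormedAddCommGroup F] [NormedSpace ℝ F]

theorem deriv_deriv_comp_line {φ : F → ℝ} (hφ : ContDiff ℝ 2 φ) (x v : F) (t : ℝ) :
    deriv (deriv fun s : ℝ => φ (x + s • v)) t = fderiv ℝ (fderiv ℝ φ) (x + t • v) v v := by
  have hline : ∀ s : ℝ, HasDerivAt (fun s : ℝ => x + s • v) v s := fun s => by
    simpa using ((hasDerivAt_id s).smul_const v).const_add x
  have hderiv : deriv (fun s : ℝ => φ (x + s • v)) = fun s => fderiv ℝ φ (x + s • v) v := by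
    funext s
    exact ((hφ.differentiable (by norm_num) _).hasFDerivAt.comp_hasDerivAt s (hline s)).deriv
  have hφ' : Differentiable ℝ (fderiv ℝ φ) :=
    (hφ.fderiv_right (by norm_num : (1 : WithTop ℕ∞) + 1 ≤ 2)).differentiable one_ne_zero
  rw [hderiv]
  exact ((ContinuousLinearMap.apply ℝ ℝ v).hasFDerivAt.comp_hasDerivAt t
    ((hφ' _).hasFDerivAt.comp_hasDerivAt t (hline t))).deriv

theorem IsLocalMinOn.isLocalMax_comp_line {u φ : F → ℝ} {s : Set F} {x v : F}
    (h : IsLocalMinOn (fun z => u z - φ z) s x) (hs : ∀ t : ℝ, x + t • v ∈ s)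
    (hu : ∀ t : ℝ, u (x + t • v) = u x) : IsLocalMax (fun t : ℝ => φ (x + t • v)) 0 := by
  have hcont : Continuous fun t : ℝ => x + t • v := by fun_prop
  have htendsto : Tendsto (fun t : ℝ => x + t • v) (𝓝 0) (𝓝[s] x) :=
    tendsto_nhdsWithin_iff.mpr
      ⟨by simpa using hcont.tendsto 0, Eventually.of_forall hs⟩
  filter_upwards [htendsto.eventually h] with t ht
  have := hu t
  simp only [zero_smul, add_zero] at ht ⊢
  linarith

end Line

theorem frob_diagonal_single {d : ℕ} (A : Matrix (Fin d) (Fin d) ℝ) (i : Fin d) :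
    frob (diagonal (Pi.single i 1)) A = A i i := by
  simp [frob, Matrix.trace, Matrix.diagonal_mul, Pi.single_apply]

theorem diagonal_single_mem_S1 {d : ℕ} (i : Fin d) : diagonal (Pi.single i 1) ∈ S1 d := by
  refine ⟨posSemidef_diagonal_iff.mpr fun j => ?_, by simp [Matrix.trace_diagonal]⟩
  by_cases h : j = i <;> simp [h]

theorem Hop_zero_nonneg_of_diag_nonpos {d : ℕ} {A : Matrix (Fin d) (Fin d) ℝ} {i : Fin d}
    (h : A i i ≤ 0) : 0 ≤ Hop 0 A :=
  Real.sSup_nonneg' ⟨_, ⟨_, diagonal_single_mem_S1 i, rfl⟩, by simp [frob_diagonal_single, h]⟩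

theorem vC_is_supersolution_general {d : ℕ} [NeZero d] (hd : 2 ≤ d) (c : ℝ)
    (φ : E d → ℝ) (hφ : ContDiff ℝ 2 φ) (x : E d) (hx : x ∈ Obar d)
    (hmin : ∃ r > 0, ∀ z ∈ Obar d, ‖z - x‖ < r → vC c x - φ x ≤ vC c z - φ z) :
    (x 0 = 0 → 0 ≤ max (Hop 0 (hessMat φ x)) (vC c x)) ∧
    (0 < x 0 → 0 ≤ Hop 0 (hessMat φ x)) := by
  set i : Fin d := ⟨1, hd⟩
  set v : E d := EuclideanSpace.single i 1
  have hline : ∀ t : ℝ, (x + t • v) 0 = x 0 := fun t => by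
    simp [v, i, Fin.ext_iff]
  have hminOn : IsLocalMinOn (fun z => vC c z - φ z) (Obar d) x := by
    obtain ⟨r, hr, hr'⟩ := hmin
    exact Metric.nhdsWithin_basis_ball.eventually_iff.mpr ⟨r, hr, fun z ⟨hzr, hz⟩ =>
      hr' z hz (by rwa [Metric.mem_ball, dist_eq_norm] at hzr)⟩
  have hmax : IsLocalMax (fun t : ℝ => φ (x + t • v)) 0 :=
    hminOn.isLocalMax_comp_line (fun t => by simpa [Obar, hline] using hx)
      (fun t => by simp [vC, hline])
  have hH : 0 ≤ Hop 0 (hessMat φ x) := by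
    refine Hop_zero_nonneg_of_diag_nonpos (i := i) ?_
    have := hmax.deriv_deriv_nonpos (hφ.continuous.comp (by fun_prop)).continuousAt
    rwa [deriv_deriv_comp_line hφ, zero_smul, add_zero] at this
  exact ⟨fun _ => le_max_of_le_left hH, fun _ => hH⟩

/-- v_c is a viscosity supersolution in the Barles–Souganidis sense of
H(D²u) = 0 with homogeneous Dirichlet data on the half-space. -/
theorem vC_is_supersolution {d : ℕ} [NeZero d] (hd : 2 ≤ d) (c : ℝ) (hc : 0 < c)
    (φ : E d → ℝ) (hφ : ContDiff ℝ 2 φ) (x : E d) (hx : x ∈ Obar d)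
    (hmin : ∃ r > 0, ∀ z ∈ Obar d, ‖z - x‖ < r → vC c x - φ x ≤ vC c z - φ z) :
    (x 0 = 0 → 0 ≤ max (Hop 0 (hessMat φ x)) (vC c x)) ∧
    (0 < x 0 → 0 ≤ Hop 0 (hessMat φ x)) :=
  vC_is_supersolution_general hd c φ hφ x hx hmin
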